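/- Define the purified determinant of an element g = (ρ, M) of G = S_n ⋉ M_n(ℤ) as P(g) = det(Σ_{k=0}^{r-1} ρ^k(M)) where r is the order of ρ. Then P is a class function: P(h⁻¹gh) = P(g) for all g, h ∈ G. In particular P(g₁g₂) = P(g₂g₁). -/
import Mathlib

def permMat {n : ℕ} (ρ : Equiv.Perm (Fin n))
    (M : Matrix (Fin n) (Fin n) ℤ) : Matrix (Fin n) (Fin n) ℤ :=
  fun i j => M (ρ⁻¹ i) (ρ⁻¹ j)

def pmul {n : ℕ} (x y : Equiv.Perm (Fin n) × Matrix (Fin n) (Fin n) ℤ) :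
    Equiv.Perm (Fin n) × Matrix (Fin n) (Fin n) ℤ :=
  (x.1 * y.1, x.2 + permMat x.1 y.2)


def pinv {n : ℕ} (h : Equiv.Perm (Fin n) × Matrix (Fin n) (Fin n) ℤ) :
    Equiv.Perm (Fin n) × Matrix (Fin n) (Fin n) ℤ :=
  (h.1⁻¹, -permMat h.1⁻¹ h.2)

noncomputable def purifiedDet {n : ℕ} (g : Equiv.Perm (Fin n) × Matrix (Fin n) (Fin n) ℤ) : ℤ :=
  (∑ k ∈ Finset.range (orderOf g.1), permMat (g.1 ^ k) g.2).det

lemma permMat_mul {n : ℕ} (σ τ : Equiv.Perm (Fin n)) (M : Matrix (Fin n) (Fin n) ℤ) :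
    permMat (σ * τ) M = permMat σ (permMat τ M) := by
  funext i j; simp [permMat, mul_inv_rev]

lemma permMat_one {n : ℕ} (M : Matrix (Fin n) (Fin n) ℤ) : permMat 1 M = M := by
  funext i j; simp [permMat]

lemma permMat_add {n : ℕ} (σ : Equiv.Perm (Fin n)) (A B : Matrix (Fin n) (Fin n) ℤ) :
    permMat σ (A + B) = permMat σ A + permMat σ B := by
  funext i j; simp [permMat, Matrix.add_apply]

lemma permMat_neg {n : ℕ} (σ : Equiv.Perm (Fin n)) (A : Matrix (Fin n) (Fin n) ℤ) :
    permMat σ (-A) = -permMat σ A := by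
  funext i j; simp [permMat, Matrix.neg_apply]

lemma permMat_sub {n : ℕ} (σ : Equiv.Perm (Fin n)) (A B : Matrix (Fin n) (Fin n) ℤ) :
    permMat σ (A - B) = permMat σ A - permMat σ B := by
  funext i j; simp [permMat, Matrix.sub_apply]

lemma permMat_sum {n : ℕ} (σ : Equiv.Perm (Fin n)) (s : Finset ℕ)
    (f : ℕ → Matrix (Fin n) (Fin n) ℤ) :
    permMat σ (∑ k ∈ s, f k) = ∑ k ∈ s, permMat σ (f k) := by
  funext i j
  simp [permMat, Matrix.sum_apply]

lemma det_permMat {n : ℕ} (σ : Equiv.Perm (Fin n)) (M : Matrix (Fin n) (Fin n) ℤ) :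
    (permMat σ M).det = M.det := by
  have h : permMat σ M = M.submatrix ⇑σ⁻¹ ⇑σ⁻¹ := rfl
  rw [h, Matrix.det_submatrix_equiv_self σ⁻¹ M]

lemma pinv_pmul {n : ℕ} (a b : Equiv.Perm (Fin n) × Matrix (Fin n) (Fin n) ℤ) :
    pmul (pinv a) (pmul a b) = b := by
  apply Prod.ext
  · simp [pmul, pinv]
  · simp [pmul, pinv, permMat_add, ← permMat_mul, permMat_one]

lemma pd_conj {n : ℕ} (g h : Equiv.Perm (Fin n) × Matrix (Fin n) (Fin n) ℤ) :
    purifiedDet (pmul (pmul (pinv h) g) h) = purifiedDet g := by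
  obtain ⟨ρ, M⟩ := g
  obtain ⟨σ, N⟩ := h
  have horder : orderOf (σ⁻¹ * ρ * σ) = orderOf ρ := by
    have := orderOf_injective (MulAut.conj σ⁻¹).toMonoidHom (MulEquiv.injective _) ρ
    simpa [MulAut.conj_apply, mul_assoc] using this
  have hconj : ∀ k : ℕ, (σ⁻¹ * ρ * σ) ^ k = σ⁻¹ * ρ ^ k * σ := by
    intro k
    have := conj_pow (a := σ⁻¹) (b := ρ) (i := k)
    simpa using this
  simp only [purifiedDet, pmul, pinv]
  rw [horder]
  have key : (∑ k ∈ Finset.range (orderOf ρ), permMat ((σ⁻¹ * ρ * σ) ^ k)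
      (-permMat σ⁻¹ N + permMat σ⁻¹ M + permMat (σ⁻¹ * ρ) N))
      = permMat σ⁻¹ (∑ k ∈ Finset.range (orderOf ρ), permMat (ρ ^ k) M) := by
    have hterm : ∀ k : ℕ, permMat ((σ⁻¹ * ρ * σ) ^ k)
        (-permMat σ⁻¹ N + permMat σ⁻¹ M + permMat (σ⁻¹ * ρ) N)
        = permMat σ⁻¹ (permMat (ρ ^ k) M)
          + (permMat σ⁻¹ (permMat (ρ ^ (k+1)) N) - permMat σ⁻¹ (permMat (ρ ^ k) N)) := by
      intro k
      rw [hconj k, permMat_mul, permMat_mul]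
      have h1 : permMat σ (-permMat σ⁻¹ N + permMat σ⁻¹ M + permMat (σ⁻¹ * ρ) N)
          = M + (permMat ρ N - N) := by
        simp only [permMat_add, permMat_neg, ← permMat_mul, ← mul_assoc,
          mul_inv_cancel, one_mul, permMat_one]
        abel
      rw [h1, pow_succ, permMat_mul]
      simp only [permMat_add, permMat_sub]
    calc ∑ k ∈ Finset.range (orderOf ρ), permMat ((σ⁻¹ * ρ * σ) ^ k)
          (-permMat σ⁻¹ N + permMat σ⁻¹ M + permMat (σ⁻¹ * ρ) N)
        = ∑ k ∈ Finset.range (orderOf ρ), (permMat σ⁻¹ (permMat (ρ ^ k) M)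
          + (permMat σ⁻¹ (permMat (ρ ^ (k+1)) N) - permMat σ⁻¹ (permMat (ρ ^ k) N))) := by
          exact Finset.sum_congr rfl fun k _ => hterm k
      _ = (∑ k ∈ Finset.range (orderOf ρ), permMat σ⁻¹ (permMat (ρ ^ k) M))
          + ∑ k ∈ Finset.range (orderOf ρ),
            (permMat σ⁻¹ (permMat (ρ ^ (k+1)) N) - permMat σ⁻¹ (permMat (ρ ^ k) N)) := by
          rw [Finset.sum_add_distrib]
      _ = (∑ k ∈ Finset.range (orderOf ρ), permMat σ⁻¹ (permMat (ρ ^ k) M)) := by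
          rw [Finset.sum_range_sub (fun k => permMat σ⁻¹ (permMat (ρ ^ k) N))]
          simp [pow_orderOf_eq_one, permMat_one]
      _ = permMat σ⁻¹ (∑ k ∈ Finset.range (orderOf ρ), permMat (ρ ^ k) M) := by
          rw [permMat_sum]
  rw [key, det_permMat]

theorem stmt_11 {n : ℕ} (g h g₁ g₂ : Equiv.Perm (Fin n) × Matrix (Fin n) (Fin n) ℤ) :
    purifiedDet (pmul (pmul (pinv h) g) h) = purifiedDet g ∧
    purifiedDet (pmul g₁ g₂) = purifiedDet (pmul g₂ g₁) := by
  refine ⟨pd_conj g h, ?_⟩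
  have := pd_conj (pmul g₂ g₁) g₂
  rwa [pinv_pmul] at this
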